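/- arXiv:1802.06357 — 3 statements merged into one kernel-verified Lean document; each statement's English description precedes it below -/
import Mathlib

section
/- Let 1 < p < 2 and consider the p-norm divergence Ψ_p(w) = (1/2)‖w‖_p² on ℝ^d, with Bregman distance D_{Ψ_p}(w̃,w) = Ψ_p(w̃) - Ψ_p(w) - ⟨w̃-w, ∇Ψ_p(w)⟩. Then for all w̃, w ∈ ℝ^d, D_{Ψ_p}(w̃, w) ≤ ((2‖w̃‖_p)^{2-p} + ‖w̃‖_p^{p-1} + 1)·(‖w̃-w‖_p² + ‖w̃-w‖_p^{min{p, 3-p}}). -/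
open MeasureTheory ProbabilityTheory Filter
open scoped RealInnerProductSpace

/-- The Bregman distance `D_g(a, b) = g(a) - g(b) - ⟨a - b, ∇g(b)⟩`. -/
noncomputable def bregman {E : Type*} [NormedAddCommGroup E] [NormedSpace ℝ E]
    (g : E → ℝ) (a b : E) : ℝ :=
  g a - g b - fderiv ℝ g b (a - b)

/-- The `p`-norm on `ℝ^d`. -/
noncomputable def pnorm {d : ℕ} (p : ℝ) (u : Fin d → ℝ) : ℝ :=
  (∑ i, |u i| ^ p) ^ (1 / p)

/-- The `p`-norm divergence `Ψ_p(w) = (1/2)‖w‖_p²`. -/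
noncomputable def pdiv {d : ℕ} (p : ℝ) (u : Fin d → ℝ) : ℝ :=
  1 / 2 * pnorm p u ^ 2

section Aux

open Real Finset

/- ### Scalar rpow inequalities -/

private lemma my_rpow_add_le {e : ℝ} (a b : ℝ) (ha : 0 ≤ a) (hb : 0 ≤ b)
    (he0 : 0 ≤ e) (he1 : e ≤ 1) : (a + b) ^ e ≤ a ^ e + b ^ e := by
  lift a to NNReal using ha
  lift b to NNReal using hb
  have := NNReal.rpow_add_le_add_rpow a b he0 he1
  exact_mod_cast this

private lemma my_rpow_sub_le {e : ℝ} {x y : ℝ} (hy : 0 ≤ y) (hxy : y ≤ x)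
    (he0 : 0 ≤ e) (he1 : e ≤ 1) : x ^ e - y ^ e ≤ (x - y) ^ e := by
  have h := my_rpow_add_le (x - y) y (by linarith) hy he0 he1
  have : x ^ e ≤ (x - y) ^ e + y ^ e := by simpa using h
  linarith

private lemma my_abs_rpow_sub {e : ℝ} {x y : ℝ} (hx : 0 ≤ x) (hy : 0 ≤ y)
    (he0 : 0 ≤ e) (he1 : e ≤ 1) : |x ^ e - y ^ e| ≤ |x - y| ^ e := by
  rcases le_total y x with h | h
  · rw [abs_of_nonneg (sub_nonneg.2 (Real.rpow_le_rpow hy h he0)),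
      abs_of_nonneg (by linarith : (0:ℝ) ≤ x - y)]
    exact my_rpow_sub_le hy h he0 he1
  · rw [abs_sub_comm, abs_sub_comm x y,
      abs_of_nonneg (sub_nonneg.2 (Real.rpow_le_rpow hx h he0)),
      abs_of_nonneg (by linarith : (0:ℝ) ≤ y - x)]
    exact my_rpow_sub_le hx h he0 he1

private lemma my_two_pt {e : ℝ} (a b : ℝ) (ha : 0 ≤ a) (hb : 0 ≤ b)
    (he0 : 0 < e) (he1 : e ≤ 1) : a ^ e + b ^ e ≤ 2 ^ (1 - e) * (a + b) ^ e := by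
  have hp : (1:ℝ) ≤ 1 / e := (le_div_iff₀ he0).2 (by linarith)
  have h := Real.arith_mean_le_rpow_mean (Finset.univ : Finset (Fin 2))
    ![1/2, 1/2] ![a ^ e, b ^ e] (by intro i _; fin_cases i <;> norm_num)
    (by simp [Fin.sum_univ_two]; norm_num)
    (by intro i _; fin_cases i <;> simp <;> positivity) hp
  simp only [Fin.sum_univ_two, Matrix.cons_val_zero, Matrix.cons_val_one, Matrix.head_cons] at h
  have hae : (a ^ e) ^ (1/e) = a := by
    rw [← Real.rpow_mul ha, mul_one_div_cancel he0.ne', Real.rpow_one]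
  have hbe : (b ^ e) ^ (1/e) = b := by
    rw [← Real.rpow_mul hb, mul_one_div_cancel he0.ne', Real.rpow_one]
  rw [hae, hbe, one_div_one_div] at h
  have h2 : 1/2 * a ^ e + 1/2 * b ^ e ≤ ((a+b)/2) ^ e := by
    convert h using 2; ring
  have h3 : ((a+b)/2 : ℝ) ^ e = (a+b) ^ e / 2 ^ e :=
    Real.div_rpow (by linarith) (by norm_num) e
  have h4 : (2:ℝ) ^ (1 - e) = 2 / 2 ^ e := by
    rw [Real.rpow_sub (by norm_num), Real.rpow_one]
  have h5 : (0:ℝ) < 2 ^ e := Real.rpow_pos_of_pos (by norm_num) e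
  rw [h3] at h2
  rw [h4, div_mul_eq_mul_div, le_div_iff₀ h5]
  have := mul_le_mul_of_nonneg_right h2 h5.le
  rw [div_mul_cancel₀ _ h5.ne'] at this
  linarith

/- ### The map `φ(x) = |x|^(p-2) x` -/

variable {p : ℝ}

private lemma phi_eq_of_nonneg (hp1 : 1 < p) (hp2 : p < 2) {x : ℝ} (hx : 0 ≤ x) :
    |x| ^ (p - 2) * x = x ^ (p - 1) := by
  rcases eq_or_lt_of_le hx with h | h
  · rw [← h, Real.zero_rpow (by linarith), abs_zero, Real.zero_rpow (by linarith), mul_zero]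
  · rw [abs_of_pos h, show p - 1 = p - 2 + 1 by ring, Real.rpow_add_one h.ne']

private lemma phi_neg_arg (x : ℝ) : |(-x)| ^ (p - 2) * (-x) = -(|x| ^ (p - 2) * x) := by
  rw [abs_neg]; ring

private lemma abs_phi (hp1 : 1 < p) (x : ℝ) : |(|x| ^ (p - 2) * x)| = |x| ^ (p - 1) := by
  rw [abs_mul, abs_rpow_of_nonneg (abs_nonneg x), abs_abs,
    show p - 1 = p - 2 + 1 by ring]
  rcases eq_or_ne x 0 with rfl | h
  · simp [Real.zero_rpow, show p - 2 + 1 ≠ 0 by intro hh; linarith]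
  · rw [Real.rpow_add_one (abs_ne_zero.2 h)]

private lemma phi_holder_nonneg (hp1 : 1 < p) (hp2 : p < 2) {x y : ℝ} (hy : 0 ≤ y) (hxy : y ≤ x) :
    |(|x| ^ (p - 2) * x) - (|y| ^ (p - 2) * y)| ≤ |x - y| ^ (p - 1) := by
  have hx : 0 ≤ x := hy.trans hxy
  rw [phi_eq_of_nonneg hp1 hp2 hx, phi_eq_of_nonneg hp1 hp2 hy,
    abs_of_nonneg (sub_nonneg.2 (Real.rpow_le_rpow hy hxy (by linarith))),
    abs_of_nonneg (by linarith : (0:ℝ) ≤ x - y)]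
  exact my_rpow_sub_le hy hxy (by linarith) (by linarith)

private lemma phi_holder (hp1 : 1 < p) (hp2 : p < 2) (x y : ℝ) :
    |(|x| ^ (p - 2) * x) - (|y| ^ (p - 2) * y)| ≤ 2 ^ (2 - p) * |x - y| ^ (p - 1) := by
  have h2p : (1:ℝ) ≤ 2 ^ (2 - p) := by
    calc (1:ℝ) = 2 ^ (0:ℝ) := (Real.rpow_zero 2).symm
    _ ≤ 2 ^ (2 - p) := Real.rpow_le_rpow_of_exponent_le one_le_two (by linarith)
  have key : ∀ a b : ℝ, 0 ≤ a → b ≤ 0 →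
      |(|a| ^ (p - 2) * a) - (|b| ^ (p - 2) * b)| ≤ 2 ^ (2 - p) * |a - b| ^ (p - 1) := by
    intro a b ha hb
    have hb' : 0 ≤ -b := by linarith
    have e1 : |b| ^ (p - 2) * b = -((-b) ^ (p - 1)) := by
      have := phi_eq_of_nonneg hp1 hp2 hb'
      rw [abs_neg] at this; linarith [this]
    rw [e1, phi_eq_of_nonneg hp1 hp2 ha, sub_neg_eq_add,
      abs_of_nonneg (by positivity)]
    have habs : |a - b| = a + -b := by
      rw [abs_of_nonneg (by linarith)]; ring
    rw [habs]
    have := my_two_pt (e := p - 1) a (-b) ha hb' (by linarith) (by linarith)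
    calc a ^ (p-1) + (-b) ^ (p-1) ≤ 2 ^ (1 - (p-1)) * (a + -b) ^ (p-1) := this
    _ = 2 ^ (2 - p) * (a + -b) ^ (p-1) := by ring_nf
  have same : ∀ a b : ℝ, 0 ≤ b → 0 ≤ a →
      |(|a| ^ (p - 2) * a) - (|b| ^ (p - 2) * b)| ≤ 2 ^ (2 - p) * |a - b| ^ (p - 1) := by
    intro a b hb ha
    rcases le_total b a with h | h
    · exact (phi_holder_nonneg hp1 hp2 hb h).trans
        (le_mul_of_one_le_left (Real.rpow_nonneg (abs_nonneg _) _) h2p)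
    · rw [abs_sub_comm, abs_sub_comm a b]
      exact (phi_holder_nonneg hp1 hp2 ha h).trans
        (le_mul_of_one_le_left (Real.rpow_nonneg (abs_nonneg _) _) h2p)
  rcases le_total 0 x with hx | hx <;> rcases le_total 0 y with hy | hy
  · exact same x y hy hx
  · exact key x y hx hy
  · rw [abs_sub_comm, abs_sub_comm x y]; exact key y x hy hx
  · have := same (-x) (-y) (by linarith) (by linarith)
    rw [phi_neg_arg, phi_neg_arg, show -(|x| ^ (p-2) * x) - -(|y| ^ (p-2) * y)
      = -((|x| ^ (p-2) * x) - (|y| ^ (p-2) * y)) by ring, abs_neg,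
      show -x - -y = -(x - y) by ring, abs_neg] at this
    exact this

/- ### `pnorm` basics -/

variable {d : ℕ}

private lemma S_nonneg (p : ℝ) (u : Fin d → ℝ) : 0 ≤ ∑ i, |u i| ^ p :=
  Finset.sum_nonneg fun _ _ => Real.rpow_nonneg (abs_nonneg _) _

private lemma pnorm_nonneg (p : ℝ) (u : Fin d → ℝ) : 0 ≤ pnorm p u :=
  Real.rpow_nonneg (S_nonneg p u) _

/-- `pnorm p u ^ e = (∑ |u i|^p) ^ (e/p)`. -/
private lemma pnorm_rpow (hp1 : 1 < p) (u : Fin d → ℝ) (e : ℝ) :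
    pnorm p u ^ e = (∑ i, |u i| ^ p) ^ (e / p) := by
  have hp0 : (0:ℝ) < p := by linarith
  rw [pnorm, ← Real.rpow_mul (S_nonneg p u)]
  congr 1
  field_simp

private lemma pdiv_eq (hp1 : 1 < p) (u : Fin d → ℝ) :
    pdiv p u = 1 / 2 * (∑ i, |u i| ^ p) ^ (2 / p) := by
  have hp0 : (0:ℝ) < p := by linarith
  rw [pdiv, pnorm, sq, ← Real.rpow_add' (S_nonneg p u) (by positivity),
    show 1/p + 1/p = 2/p by ring]

private lemma pnorm_sub_comm (p : ℝ) (a b : Fin d → ℝ) :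
    pnorm p (a - b) = pnorm p (b - a) := by
  unfold pnorm
  congr 1
  apply Finset.sum_congr rfl
  intro i _
  rw [Pi.sub_apply, Pi.sub_apply, abs_sub_comm]

/-- triangle-type inequality -/
private lemma pnorm_le_add (hp1 : 1 < p) (a u : Fin d → ℝ) :
    pnorm p u ≤ pnorm p a + pnorm p (a - u) := by
  have h := Real.Lp_add_le Finset.univ (fun i => a i) (fun i => u i - a i) (by linarith : 1 ≤ p)
  have h1 : (∑ i, |a i + (u i - a i)| ^ p) ^ (1/p) = pnorm p u := by
    unfold pnorm; congr 1; apply Finset.sum_congr rfl; intro i _; congr 2; ring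
  have h2 : (∑ i, |u i - a i| ^ p) ^ (1/p) = pnorm p (a - u) := by
    rw [pnorm_sub_comm p a u]; unfold pnorm; congr 1
  rw [h1, h2] at h
  exact h.trans (by rfl)

private lemma abs_pnorm_sub (hp1 : 1 < p) (a u : Fin d → ℝ) :
    |pnorm p a - pnorm p u| ≤ pnorm p (a - u) := by
  rw [abs_sub_le_iff]
  constructor
  · have := pnorm_le_add hp1 u a
    rw [pnorm_sub_comm p u a] at this
    linarith
  · linarith [pnorm_le_add hp1 a u]

/- ### Hölder pairing -/

/-- Hölder: `|∑ f i * g i| ≤ (∑ |f i|^(p/(p-1)))^((p-1)/p) * pnorm p g`. -/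
private lemma inner_abs_le (hp1 : 1 < p) (f g : Fin d → ℝ) :
    |∑ i, f i * g i| ≤ (∑ i, |f i| ^ (p/(p-1))) ^ ((p-1)/p) * pnorm p g := by
  have hq : (p/(p-1)).HolderConjugate p := (Real.HolderConjugate.conjExponent hp1).symm
  have h := Real.inner_le_Lp_mul_Lq Finset.univ (fun i => |f i|) (fun i => |g i|) hq
  simp only [abs_abs] at h
  calc |∑ i, f i * g i| ≤ ∑ i, |f i * g i| := Finset.abs_sum_le_sum_abs _ _
    _ = ∑ i, |f i| * |g i| := by apply Finset.sum_congr rfl; intro i _; rw [abs_mul]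
    _ ≤ (∑ i, |f i| ^ (p/(p-1))) ^ (1/(p/(p-1))) * (∑ i, |g i| ^ p) ^ (1/p) := h
    _ = (∑ i, |f i| ^ (p/(p-1))) ^ ((p-1)/p) * pnorm p g := by
        rw [pnorm]
        congr 2
        rw [one_div_div]

/-- `|∑ φ(u i) * w i| ≤ pnorm p u ^ (p-1) * pnorm p w`. -/
private lemma pair_bound (hp1 : 1 < p) (u w : Fin d → ℝ) :
    |∑ i, |u i| ^ (p-2) * u i * w i| ≤ pnorm p u ^ (p-1) * pnorm p w := by
  have h := inner_abs_le hp1 (fun i => |u i| ^ (p-2) * u i) w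
  have hp1' : p - 1 ≠ 0 := by intro h; nlinarith
  have hph : ∀ i, |(|u i| ^ (p-2) * u i)| ^ (p/(p-1)) = |u i| ^ p := by
    intro i
    rw [abs_phi hp1, ← Real.rpow_mul (abs_nonneg _)]
    congr 1
    field_simp
  simp only [hph] at h
  rw [pnorm_rpow hp1 u (p-1)]
  exact h

/-- `|∑ (φ(a i) - φ(u i)) * (a i - u i)| ≤ 2^(2-p) * pnorm p (a-u)^(p-1) * pnorm p (a-u)`. -/
private lemma diff_bound (hp1 : 1 < p) (hp2 : p < 2) (a u : Fin d → ℝ) :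
    |∑ i, (|a i| ^ (p-2) * a i - |u i| ^ (p-2) * u i) * (a i - u i)| ≤
      2 ^ (2-p) * pnorm p (a - u) ^ (p-1) * pnorm p (a - u) := by
  have hp0 : (0:ℝ) < p := by linarith
  have hp1' : p - 1 ≠ 0 := by nlinarith
  have hq0 : (0:ℝ) ≤ p/(p-1) := by apply div_nonneg <;> linarith
  have h := inner_abs_le hp1 (fun i => |a i| ^ (p-2) * a i - |u i| ^ (p-2) * u i)
    (fun i => a i - u i)
  have hg : pnorm p (fun i => a i - u i) = pnorm p (a - u) := rfl
  rw [hg] at h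
  refine h.trans ?_
  apply mul_le_mul_of_nonneg_right _ (pnorm_nonneg p _)
  have step1 : ∑ i, |(|a i| ^ (p-2) * a i - |u i| ^ (p-2) * u i)| ^ (p/(p-1)) ≤
      (2 ^ (2-p)) ^ (p/(p-1)) * ∑ i, |a i - u i| ^ p := by
    rw [Finset.mul_sum]
    apply Finset.sum_le_sum
    intro i _
    calc |(|a i| ^ (p-2) * a i - |u i| ^ (p-2) * u i)| ^ (p/(p-1))
        ≤ (2 ^ (2-p) * |a i - u i| ^ (p-1)) ^ (p/(p-1)) :=
          Real.rpow_le_rpow (abs_nonneg _) (phi_holder hp1 hp2 (a i) (u i)) hq0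
      _ = (2 ^ (2-p)) ^ (p/(p-1)) * |a i - u i| ^ p := by
          rw [Real.mul_rpow (by positivity) (Real.rpow_nonneg (abs_nonneg _) _),
            ← Real.rpow_mul (abs_nonneg _)]
          congr 2
          field_simp
  calc (∑ i, |(|a i| ^ (p-2) * a i - |u i| ^ (p-2) * u i)| ^ (p/(p-1))) ^ ((p-1)/p)
      ≤ ((2 ^ (2-p)) ^ (p/(p-1)) * ∑ i, |a i - u i| ^ p) ^ ((p-1)/p) :=
        Real.rpow_le_rpow (Finset.sum_nonneg fun _ _ => Real.rpow_nonneg (abs_nonneg _) _)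
          step1 (by apply div_nonneg <;> linarith)
    _ = 2 ^ (2-p) * pnorm p (a - u) ^ (p-1) := by
        rw [Real.mul_rpow (Real.rpow_nonneg (by positivity) _) (S_nonneg p _),
          ← Real.rpow_mul (by positivity : (0:ℝ) ≤ (2:ℝ) ^ (2-p)), pnorm_rpow hp1]
        have hSv : ∑ i, |(a - u) i| ^ p = ∑ i, |a i - u i| ^ p := rfl
        rw [hSv, show p/(p-1) * ((p-1)/p) = 1 by field_simp, Real.rpow_one]

/- ### `fderiv` of `pdiv` -/

private lemma hasFDerivAt_pdiv (hp1 : 1 < p) (hp2 : p < 2) (u : Fin d → ℝ) :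
    HasFDerivAt (pdiv p)
      (∑ i, (pnorm p u ^ (2 - p) * (|u i| ^ (p - 2) * u i)) •
        (ContinuousLinearMap.proj (R := ℝ) (φ := fun _ : Fin d => ℝ) i)) u := by
  have hp0 : (0:ℝ) < p := by linarith
  have hS : HasFDerivAt (fun v : Fin d → ℝ => ∑ i, |v i| ^ p)
      (∑ i, (p * |u i| ^ (p - 2) * u i) •
        (ContinuousLinearMap.proj (R := ℝ) (φ := fun _ : Fin d => ℝ) i)) u := by
    apply HasFDerivAt.fun_sum
    intro i _
    exact (hasDerivAt_abs_rpow (u i) hp1).comp_hasFDerivAt u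
      ((ContinuousLinearMap.proj (R := ℝ) (φ := fun _ : Fin d => ℝ) i).hasFDerivAt)
  have houter : HasDerivAt (fun x : ℝ => x ^ (2 / p))
      ((2 / p) * (∑ i, |u i| ^ p) ^ (2 / p - 1)) (∑ i, |u i| ^ p) :=
    Real.hasDerivAt_rpow_const (Or.inr (by rw [le_div_iff₀ hp0]; linarith))
  have hcomp := (houter.comp_hasFDerivAt u hS).const_mul (1/2 : ℝ)
  have heq : (fun y => 1/2 * ((fun x : ℝ => x ^ (2 / p)) ∘
      fun v : Fin d → ℝ => ∑ i, |v i| ^ p) y) = pdiv p := by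
    funext v; simp only [Function.comp]; rw [pdiv_eq hp1]
  rw [heq] at hcomp
  convert hcomp using 1
  case e'_4 | e'_5 | e'_6 | e'_8 | e'_9 => rfl
  rw [smul_smul, Finset.smul_sum]
  apply Finset.sum_congr rfl
  intro i _
  rw [smul_smul]
  congr 1
  have hN : pnorm p u ^ (2 - p) = (∑ i, |u i| ^ p) ^ (2 / p - 1) := by
    rw [pnorm_rpow hp1]
    congr 1
    field_simp
  rw [hN]
  field_simp

private lemma fderiv_pdiv_apply (hp1 : 1 < p) (hp2 : p < 2) (u w : Fin d → ℝ) :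
    fderiv ℝ (pdiv p) u w = pnorm p u ^ (2-p) * ∑ i, |u i| ^ (p-2) * u i * w i := by
  rw [(hasFDerivAt_pdiv hp1 hp2 u).fderiv]
  simp only [ContinuousLinearMap.coe_sum', Finset.sum_apply,
    ContinuousLinearMap.coe_smul', Pi.smul_apply, ContinuousLinearMap.proj_apply,
    smul_eq_mul, Finset.mul_sum]
  apply Finset.sum_congr rfl
  intro i _
  ring

/- ### remaining pieces -/

private lemma sum_phi_self (hp1 : 1 < p) (hp2 : p < 2) (u : Fin d → ℝ) :
    ∑ i, |u i| ^ (p-2) * u i * u i = ∑ i, |u i| ^ p := by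
  apply Finset.sum_congr rfl
  intro i _
  rcases eq_or_ne (u i) 0 with h | h
  · rw [h]; simp [Real.zero_rpow (by intro hh; linarith : p ≠ 0)]
  · have habs : |u i| ≠ 0 := abs_ne_zero.2 h
    calc |u i| ^ (p-2) * u i * u i = |u i| ^ (p-2) * (|u i| * |u i|) := by
          rw [mul_assoc, abs_mul_abs_self]
      _ = |u i| ^ (p-2+1+1) := by
          rw [Real.rpow_add_one habs, Real.rpow_add_one habs]; ring
      _ = |u i| ^ p := by congr 1; ring

private lemma pnorm_rpow_p (hp1 : 1 < p) (u : Fin d → ℝ) :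
    pnorm p u ^ p = ∑ i, |u i| ^ p := by
  rw [pnorm_rpow hp1, div_self (by positivity : p ≠ 0), Real.rpow_one]

/-- final numeric step -/
private lemma final_step (hp1 : 1 < p) (hp2 : p < 2) (A B t : ℝ)
    (hA : 0 ≤ A) (hB : 0 ≤ B) (ht : 0 ≤ t) :
    A * t ^ p + B * t ^ (3-p) + t ^ 2 ≤
      (A + B + 1) * (t ^ 2 + t ^ min p (3-p)) := by
  rcases eq_or_lt_of_le ht with h | h
  · rw [← h]
    have hmin : (0:ℝ) < min p (3-p) := lt_min (by linarith) (by linarith)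
    rw [Real.zero_rpow (by intro hh; linarith : p ≠ 0),
      Real.zero_rpow (by intro hh; linarith : (3:ℝ) - p ≠ 0),
      Real.zero_rpow hmin.ne']
    norm_num
  · have hmin : (0:ℝ) < min p (3-p) := lt_min (by linarith) (by linarith)
    have key : ∀ e : ℝ, min p (3-p) ≤ e → e ≤ 2 → t ^ e ≤ t ^ 2 + t ^ min p (3-p) := by
      intro e he1 he2
      rcases le_total t 1 with h1 | h1
      · have : t ^ e ≤ t ^ min p (3-p) :=
          Real.rpow_le_rpow_of_exponent_ge h h1 he1
        have h2 : (0:ℝ) ≤ t ^ 2 := by positivity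
        linarith
      · have : t ^ e ≤ t ^ (2:ℝ) :=
          Real.rpow_le_rpow_of_exponent_le h1 he2
        rw [← Real.rpow_natCast t 2, show ((2:ℕ):ℝ) = (2:ℝ) by norm_num]
        have h2 : (0:ℝ) ≤ t ^ min p (3-p) := Real.rpow_nonneg ht _
        linarith
    have k1 : t ^ p ≤ t ^ 2 + t ^ min p (3-p) := key p (min_le_left _ _) (by linarith)
    have k2 : t ^ (3-p) ≤ t ^ 2 + t ^ min p (3-p) := key (3-p) (min_le_right _ _) (by linarith)
    have m1 := mul_le_mul_of_nonneg_left k1 hA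
    have m2 := mul_le_mul_of_nonneg_left k2 hB
    have h3 : (0:ℝ) ≤ t ^ min p (3-p) := Real.rpow_nonneg ht _
    nlinarith

end Aux

theorem pdiv_bregman_upper_bound
    {d : ℕ} (p : ℝ) (hp1 : 1 < p) (hp2 : p < 2) :
    ∀ wt u : Fin d → ℝ,
      bregman (pdiv p) wt u ≤
        ((2 * pnorm p wt) ^ (2 - p) + pnorm p wt ^ (p - 1) + 1) *
          (pnorm p (wt - u) ^ 2 + pnorm p (wt - u) ^ min p (3 - p)) := by
  intro wt u
  have hp0 : (0:ℝ) < p := by linarith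
  have hNa0 : 0 ≤ pnorm p wt := pnorm_nonneg p wt
  have hNu0 : 0 ≤ pnorm p u := pnorm_nonneg p u
  have hNv0 : 0 ≤ pnorm p (wt - u) := pnorm_nonneg p (wt - u)
  -- Step 0 : the Bregman distance formula
  have h0 : bregman (pdiv p) wt u =
      pdiv p wt - pdiv p u -
        pnorm p u ^ (2-p) * ∑ i, |u i| ^ (p-2) * u i * (wt i - u i) := by
    unfold bregman
    rw [fderiv_pdiv_apply hp1 hp2]
    rfl
  -- Step 1 : convexity-type inequality
  have hA : ∑ i, |wt i| ^ (p-2) * wt i * (wt i - u i)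
      = (∑ i, |wt i| ^ p) - ∑ i, |wt i| ^ (p-2) * wt i * u i := by
    rw [← sum_phi_self hp1 hp2 wt, ← Finset.sum_sub_distrib]
    apply Finset.sum_congr rfl; intro i _; ring
  have hcombine1 : pnorm p wt ^ ((2:ℝ)-p) * pnorm p wt ^ p = pnorm p wt ^ (2:ℕ) := by
    rw [← Real.rpow_add' hNa0 (by norm_num : (2:ℝ)-p + p ≠ 0),
      show (2:ℝ)-p+p = ((2:ℕ):ℝ) by push_cast; ring, Real.rpow_natCast]
  have hcombine2 : pnorm p wt ^ ((2:ℝ)-p) * pnorm p wt ^ (p-1) = pnorm p wt := by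
    rw [← Real.rpow_add' hNa0 (by norm_num : (2:ℝ)-p + (p-1) ≠ 0),
      show (2:ℝ)-p+(p-1) = (1:ℝ) by ring, Real.rpow_one]
  have step1 : pdiv p wt - pdiv p u ≤
      pnorm p wt ^ (2-p) * ∑ i, |wt i| ^ (p-2) * wt i * (wt i - u i) := by
    rw [hA, mul_sub, ← pnorm_rpow_p hp1 wt, hcombine1]
    have hpair : pnorm p wt ^ ((2:ℝ)-p) * (∑ i, |wt i| ^ (p-2) * wt i * u i) ≤
        pnorm p wt * pnorm p u := by
      calc pnorm p wt ^ ((2:ℝ)-p) * (∑ i, |wt i| ^ (p-2) * wt i * u i)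
          ≤ pnorm p wt ^ ((2:ℝ)-p) * |∑ i, |wt i| ^ (p-2) * wt i * u i| :=
            mul_le_mul_of_nonneg_left (le_abs_self _) (Real.rpow_nonneg hNa0 _)
        _ ≤ pnorm p wt ^ ((2:ℝ)-p) * (pnorm p wt ^ (p-1) * pnorm p u) :=
            mul_le_mul_of_nonneg_left (pair_bound hp1 wt u) (Real.rpow_nonneg hNa0 _)
        _ = pnorm p wt * pnorm p u := by rw [← mul_assoc, hcombine2]
    unfold pdiv
    nlinarith [hpair, sq_nonneg (pnorm p wt - pnorm p u)]
  -- Step 2 : bound by gradient difference, split into two terms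
  have step2 : bregman (pdiv p) wt u ≤
      pnorm p wt ^ (2-p) *
        ((∑ i, |wt i| ^ (p-2) * wt i * (wt i - u i)) -
          ∑ i, |u i| ^ (p-2) * u i * (wt i - u i)) +
      (pnorm p wt ^ (2-p) - pnorm p u ^ (2-p)) *
        ∑ i, |u i| ^ (p-2) * u i * (wt i - u i) := by
    rw [h0]
    nlinarith [step1]
  -- Term 1
  have hdiffsum : (∑ i, |wt i| ^ (p-2) * wt i * (wt i - u i)) -
      ∑ i, |u i| ^ (p-2) * u i * (wt i - u i)
      = ∑ i, (|wt i| ^ (p-2) * wt i - |u i| ^ (p-2) * u i) * (wt i - u i) := by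
    rw [← Finset.sum_sub_distrib]
    apply Finset.sum_congr rfl; intro i _; ring
  have t1 : pnorm p wt ^ (2-p) *
      ((∑ i, |wt i| ^ (p-2) * wt i * (wt i - u i)) -
        ∑ i, |u i| ^ (p-2) * u i * (wt i - u i)) ≤
      (2 * pnorm p wt) ^ (2-p) * pnorm p (wt - u) ^ p := by
    rw [hdiffsum]
    calc pnorm p wt ^ ((2:ℝ)-p) * ∑ i, (|wt i| ^ (p-2) * wt i - |u i| ^ (p-2) * u i) * (wt i - u i)
        ≤ pnorm p wt ^ ((2:ℝ)-p) * |∑ i, (|wt i| ^ (p-2) * wt i - |u i| ^ (p-2) * u i) * (wt i - u i)| :=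
          mul_le_mul_of_nonneg_left (le_abs_self _) (Real.rpow_nonneg hNa0 _)
      _ ≤ pnorm p wt ^ ((2:ℝ)-p) *
          (2 ^ (2-p) * pnorm p (wt - u) ^ (p-1) * pnorm p (wt - u)) :=
          mul_le_mul_of_nonneg_left (diff_bound hp1 hp2 wt u) (Real.rpow_nonneg hNa0 _)
      _ = (2 * pnorm p wt) ^ (2-p) * pnorm p (wt - u) ^ p := by
          have e3 : pnorm p (wt - u) ^ (p-1) * pnorm p (wt - u) = pnorm p (wt - u) ^ p := by
            nth_rewrite 2 [← Real.rpow_one (pnorm p (wt - u))]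
            rw [← Real.rpow_add' hNv0 (by intro h; nlinarith : p - 1 + 1 ≠ 0)]
            congr 1; ring
          rw [Real.mul_rpow (by norm_num : (0:ℝ) ≤ 2) hNa0, mul_assoc (2 ^ ((2:ℝ)-p)) _ _, e3]
          ring
  -- Term 2
  have habs1 : |pnorm p wt ^ ((2:ℝ)-p) - pnorm p u ^ ((2:ℝ)-p)| ≤ pnorm p (wt - u) ^ ((2:ℝ)-p) := by
    refine (my_abs_rpow_sub hNa0 hNu0 (by linarith) (by linarith)).trans ?_
    exact Real.rpow_le_rpow (abs_nonneg _) (abs_pnorm_sub hp1 wt u) (by linarith)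
  have habs2 : |∑ i, |u i| ^ (p-2) * u i * (wt i - u i)| ≤
      pnorm p u ^ (p-1) * pnorm p (wt - u) := pair_bound hp1 u (wt - u)
  have habs3 : pnorm p u ^ (p-1) ≤ pnorm p wt ^ (p-1) + pnorm p (wt - u) ^ (p-1) := by
    refine (Real.rpow_le_rpow hNu0 (pnorm_le_add hp1 wt u) (by linarith)).trans ?_
    exact my_rpow_add_le _ _ hNa0 hNv0 (by linarith) (by linarith)
  have t2 : (pnorm p wt ^ (2-p) - pnorm p u ^ (2-p)) *
      ∑ i, |u i| ^ (p-2) * u i * (wt i - u i) ≤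
      pnorm p wt ^ (p-1) * pnorm p (wt - u) ^ ((3:ℝ)-p) + pnorm p (wt - u) ^ (2:ℕ) := by
    have e1 : pnorm p (wt - u) ^ ((2:ℝ)-p) * pnorm p (wt - u) = pnorm p (wt - u) ^ ((3:ℝ)-p) := by
      rw [show (3:ℝ)-p = (2-p)+1 by ring,
        Real.rpow_add' hNv0 (by intro h; nlinarith : (2:ℝ) - p + 1 ≠ 0), Real.rpow_one]
    have e2 : pnorm p (wt - u) ^ ((2:ℝ)-p) * pnorm p (wt - u) ^ (p-1) * pnorm p (wt - u)
        = pnorm p (wt - u) ^ (2:ℕ) := by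
      rw [← Real.rpow_add' hNv0 (by norm_num : (2:ℝ)-p + (p-1) ≠ 0),
        show (2:ℝ)-p+(p-1) = (1:ℝ) by ring, Real.rpow_one, sq]
    calc (pnorm p wt ^ (2-p) - pnorm p u ^ (2-p)) *
        ∑ i, |u i| ^ (p-2) * u i * (wt i - u i)
        ≤ |pnorm p wt ^ (2-p) - pnorm p u ^ (2-p)| * |∑ i, |u i| ^ (p-2) * u i * (wt i - u i)| := by
          rw [← abs_mul]; exact le_abs_self _
      _ ≤ pnorm p (wt - u) ^ ((2:ℝ)-p) * (pnorm p u ^ (p-1) * pnorm p (wt - u)) :=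
          mul_le_mul habs1 habs2 (abs_nonneg _) (Real.rpow_nonneg hNv0 _)
      _ ≤ pnorm p (wt - u) ^ ((2:ℝ)-p) *
          ((pnorm p wt ^ (p-1) + pnorm p (wt - u) ^ (p-1)) * pnorm p (wt - u)) :=
          mul_le_mul_of_nonneg_left
            (mul_le_mul_of_nonneg_right habs3 hNv0) (Real.rpow_nonneg hNv0 _)
      _ = pnorm p wt ^ (p-1) * pnorm p (wt - u) ^ ((3:ℝ)-p) + pnorm p (wt - u) ^ (2:ℕ) := by
          rw [show pnorm p (wt - u) ^ ((2:ℝ)-p) *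
              ((pnorm p wt ^ (p-1) + pnorm p (wt - u) ^ (p-1)) * pnorm p (wt - u))
            = pnorm p wt ^ (p-1) * (pnorm p (wt - u) ^ ((2:ℝ)-p) * pnorm p (wt - u)) +
              pnorm p (wt - u) ^ ((2:ℝ)-p) * pnorm p (wt - u) ^ (p-1) * pnorm p (wt - u) by ring,
            e1, e2]
  -- put everything together
  have total : bregman (pdiv p) wt u ≤
      (2 * pnorm p wt) ^ (2-p) * pnorm p (wt - u) ^ p +
      pnorm p wt ^ (p-1) * pnorm p (wt - u) ^ ((3:ℝ)-p) +
      pnorm p (wt - u) ^ (2:ℕ) := by linarith [step2, t1, t2]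
  refine total.trans ?_
  have := final_step hp1 hp2 ((2 * pnorm p wt) ^ ((2:ℝ)-p)) (pnorm p wt ^ (p-1))
    (pnorm p (wt - u)) (Real.rpow_nonneg (by positivity) _) (Real.rpow_nonneg hNa0 _) hNv0
  linarith [this]
end

section
/- Let d > 1 and 1 < p < 2. Then the p-norm divergence Ψ_p(w) = (1/2)‖w‖_p² on ℝ^d is not strongly smooth with respect to the p-norm: there is no constant L > 0 such that D_{Ψ_p}(w̃, w) ≤ (L/2)‖w̃-w‖_p² for all w̃, w ∈ ℝ^d. -/
open MeasureTheory ProbabilityTheory Filter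
open scoped RealInnerProductSpace

theorem pdiv_not_strongly_smooth
    {d : ℕ} (hd : 1 < d) (p : ℝ) (hp1 : 1 < p) (hp2 : p < 2) :
    ¬ ∃ L : ℝ, 0 < L ∧
        ∀ wt u : Fin d → ℝ, bregman (pdiv p) wt u ≤ L / 2 * pnorm p (wt - u) ^ 2 := by
  rintro ⟨L, hL, h⟩
  have hp0 : (0:ℝ) < p := by linarith
  have h2p : (0:ℝ) < 2 - p := by linarith
  set t : ℝ := (1/(p*L)) ^ (1/(2-p)) with ht_def
  have ht : 0 < t := Real.rpow_pos_of_pos (by positivity) _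
  have htp : (0:ℝ) < t ^ p := Real.rpow_pos_of_pos ht _
  set i0 : Fin d := ⟨0, by omega⟩ with hi0
  set i1 : Fin d := ⟨1, hd⟩ with hi1
  have hne : i0 ≠ i1 := by simp [hi0, hi1, Fin.ext_iff]
  set a : Fin d → ℝ := fun i => if i = i0 then 1 else 0 with ha
  set v : Fin d → ℝ := fun i => if i = i1 then t else 0 with hv
  -- core sum computation
  have core : ∀ s : ℝ, (∑ i : Fin d, |(if i = i0 then (1:ℝ) else 0) + (if i = i1 then s else 0)| ^ p)
      = 1 + |s| ^ p := by
    intro s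
    have hpt : ∀ i : Fin d, |(if i = i0 then (1:ℝ) else 0) + (if i = i1 then s else 0)| ^ p
        = (if i = i0 then (1:ℝ) else 0) + (if i = i1 then |s| ^ p else 0) := by
      intro i
      rcases eq_or_ne i i0 with h0 | h0
      · subst h0
        simp [hne]
      · rcases eq_or_ne i i1 with h1 | h1
        · subst h1
          simp [h0]
        · simp [h0, h1, Real.zero_rpow hp0.ne']
    rw [Finset.sum_congr rfl (fun i _ => hpt i), Finset.sum_add_distrib]
    simp
  have sum_v : ∑ i : Fin d, |v i| ^ p = t ^ p := by
    have hpt : ∀ i : Fin d, |v i| ^ p = if i = i1 then t ^ p else 0 := by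
      intro i
      rcases eq_or_ne i i1 with h1 | h1
      · simp [hv, h1, abs_of_pos ht]
      · simp [hv, h1, Real.zero_rpow hp0.ne']
    rw [Finset.sum_congr rfl (fun i _ => hpt i)]
    simp
  have pn_v : pnorm p v = t := by
    rw [pnorm, sum_v, one_div, Real.rpow_rpow_inv ht.le hp0.ne']
  have pn_nv : pnorm p (-v) = t := by
    have : ∀ i : Fin d, |(-v) i| ^ p = |v i| ^ p := by intro i; simp
    rw [pnorm, Finset.sum_congr rfl (fun i _ => this i), sum_v, one_div,
      Real.rpow_rpow_inv ht.le hp0.ne']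
  -- pdiv values
  have pdiv_a : pdiv p a = 1/2 := by
    have : ∑ i : Fin d, |a i| ^ p = 1 := by
      have := core 0
      simp only [abs_zero, Real.zero_rpow hp0.ne', add_zero] at this
      rw [← this]
      exact Finset.sum_congr rfl (fun i _ => by simp [ha])
    rw [pdiv, pnorm, this, Real.one_rpow]
    norm_num
  have hBpos : (0:ℝ) < 1 + t ^ p := by positivity
  have sq_eq : ((1 + t ^ p) ^ (1/p)) ^ 2 = (1 + t ^ p) ^ (2/p) := by
    rw [← Real.rpow_natCast ((1 + t ^ p) ^ (1/p)) 2, ← Real.rpow_mul hBpos.le]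
    norm_num
    congr 1
    ring
  have pdiv_av : pdiv p (a + v) = 1/2 * (1 + t ^ p) ^ (2/p) := by
    have hs : ∑ i : Fin d, |(a + v) i| ^ p = 1 + t ^ p := by
      have := core t
      rw [abs_of_pos ht] at this
      rw [← this]
      exact Finset.sum_congr rfl (fun i _ => by simp [ha, hv])
    rw [pdiv, pnorm, hs, sq_eq]
  have pdiv_amv : pdiv p (a - v) = 1/2 * (1 + t ^ p) ^ (2/p) := by
    have hs : ∑ i : Fin d, |(a - v) i| ^ p = 1 + t ^ p := by
      have := core (-t)
      rw [abs_neg, abs_of_pos ht] at this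
      rw [← this]
      refine Finset.sum_congr rfl (fun i _ => ?_)
      congr 2
      simp only [ha, hv, Pi.sub_apply]
      split_ifs <;> ring
    rw [pdiv, pnorm, hs, sq_eq]
  -- apply hypothesis twice
  have h1 := h (a + v) a
  have h2 := h (a - v) a
  rw [bregman, add_sub_cancel_left, pn_v, pdiv_av, pdiv_a] at h1
  rw [bregman, sub_sub_cancel_left, pn_nv, pdiv_amv, pdiv_a, map_neg] at h2
  have key : (1 + t ^ p) ^ (2/p) - 1 ≤ L * t ^ 2 := by linarith
  -- Bernoulli
  have hbern : 1 + (2/p) * t ^ p ≤ (1 + t ^ p) ^ (2/p) :=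
    one_add_mul_self_le_rpow_one_add (by linarith) (by rw [le_div_iff₀ hp0]; linarith)
  have hmain : (2/p) * t ^ p ≤ L * (t ^ p * t ^ (2 - p)) := by
    have ht2 : (t:ℝ) ^ (2:ℕ) = t ^ p * t ^ (2 - p) := by
      rw [← Real.rpow_add ht]
      norm_num
    rw [← ht2]
    linarith
  have htpow : t ^ (2 - p) = 1 / (p * L) := by
    rw [ht_def, ← Real.rpow_mul (by positivity), one_div (2-p), inv_mul_cancel₀ h2p.ne',
      Real.rpow_one]
  rw [htpow] at hmain
  have hdiv : (2/p) ≤ L * (1 / (p * L)) := le_of_mul_le_mul_right (by linarith) htp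
  have : L * (1 / (p * L)) = 1 / p := by field_simp
  rw [this] at hdiv
  have h1p : 0 < 1 / p := by positivity
  have h2eq : (2:ℝ) / p = 2 * (1 / p) := by ring
  linarith
end

section
/- Let α ∈ (0,1] and let g:ℝ^d→ℝ be a Fréchet differentiable convex function such that D_g(w, w̃) ≤ (L/(1+α))‖w - w̃‖^{1+α} for all w, w̃ ∈ ℝ^d and some constant L > 0. Then the co-coercivity inequality (2L^{-1/α}α/(1+α))·‖∇g(w) - ∇g(w̃)‖_*^{(1+α)/α} ≤ ⟨w - w̃, ∇g(w) - ∇g(w̃)⟩ holds for all w, w̃ ∈ ℝ^d. -/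
open MeasureTheory ProbabilityTheory Filter
open scoped RealInnerProductSpace

/-- Gradient inequality for a convex differentiable function. -/
lemma grad_ineq {E : Type*} [NormedAddCommGroup E] [NormedSpace ℝ E]
    (g : E → ℝ) (hg_diff : Differentiable ℝ g) (hg_conv : ConvexOn ℝ Set.univ g)
    (x y : E) : fderiv ℝ g x (y - x) ≤ g y - g x := by
  set c : ℝ → E := fun t => t • (y - x) + x with hc
  have hcd : ∀ t : ℝ, HasDerivAt c (y - x) t := by
    intro t
    simpa [hc] using ((hasDerivAt_id t).smul_const (y - x)).add_const x
  have hconv : ConvexOn ℝ Set.univ (g ∘ c) := by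
    have := hg_conv.comp_affineMap (AffineMap.lineMap x y : ℝ →ᵃ[ℝ] E)
    have he : (g ∘ (AffineMap.lineMap x y : ℝ →ᵃ[ℝ] E)) = g ∘ c := by
      funext t
      simp [hc, AffineMap.lineMap_apply, Function.comp]
    simpa [he] using this
  have hder : HasDerivAt (g ∘ c) (fderiv ℝ g x (y - x)) 0 := by
    have := (hg_diff (c 0)).hasFDerivAt.comp_hasDerivAt 0 (hcd 0)
    simpa [hc] using this
  have hs := hconv.le_slope_of_hasDerivAt (Set.mem_univ (0:ℝ)) (Set.mem_univ (1:ℝ)) one_pos hder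
  have : slope (g ∘ c) 0 1 = g y - g x := by
    simp [slope_def_field, hc, Function.comp]
  linarith [hs.trans_eq this]

/-- Norm of a real functional is attained on the closed unit ball in finite dimensions. -/
lemma exists_attains {E : Type*} [NormedAddCommGroup E] [NormedSpace ℝ E] [FiniteDimensional ℝ E]
    (f : E →L[ℝ] ℝ) : ∃ v : E, ‖v‖ ≤ 1 ∧ f v = ‖f‖ := by
  obtain ⟨v, hvmem, hvmax⟩ := (isCompact_closedBall (0:E) 1).exists_isMaxOn
    ⟨0, by simp⟩ (f.continuous.continuousOn)
  have hv1 : ‖v‖ ≤ 1 := by simpa [dist_eq_norm] using hvmem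
  have hfv0 : 0 ≤ f v := by
    have := hvmax (a := 0) (by simp)
    simpa using this
  refine ⟨v, hv1, le_antisymm ?_ ?_⟩
  · calc f v ≤ ‖f v‖ := le_abs_self _
      _ ≤ ‖f‖ * ‖v‖ := f.le_opNorm v
      _ ≤ ‖f‖ * 1 := by nlinarith [norm_nonneg f]
      _ = ‖f‖ := mul_one _
  · refine ContinuousLinearMap.opNorm_le_of_unit_norm hfv0 ?_
    intro x hx
    have h1 : f x ≤ f v := hvmax (a := x) (by simp [dist_eq_norm, hx])
    have h2 : f (-x) ≤ f v := hvmax (a := -x) (by simp [dist_eq_norm, hx])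
    simp only [map_neg] at h2
    rw [Real.norm_eq_abs, abs_le]
    constructor <;> linarith

/-- Key one-sided estimate: the Bregman distance dominates a power of the gradient difference. -/
lemma key_bregman {E : Type*} [NormedAddCommGroup E] [NormedSpace ℝ E] [FiniteDimensional ℝ E]
    (α : ℝ) (hα0 : 0 < α)
    (g : E → ℝ) (hg_diff : Differentiable ℝ g) (hg_conv : ConvexOn ℝ Set.univ g)
    (L : ℝ) (hL : 0 < L)
    (hsmooth : ∀ a b : E, bregman g a b ≤ L / (1 + α) * ‖a - b‖ ^ (1 + α))
    (a b : E) :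
    L ^ (-(1 / α)) * α / (1 + α) * ‖fderiv ℝ g a - fderiv ℝ g b‖ ^ ((1 + α) / α)
      ≤ bregman g a b := by
  have hα1 : (0:ℝ) < 1 + α := by linarith
  set f : E →L[ℝ] ℝ := fderiv ℝ g a - fderiv ℝ g b with hf
  set N : ℝ := ‖f‖ with hN
  have hN0 : 0 ≤ N := norm_nonneg f
  have hbreg_nonneg : 0 ≤ bregman g a b := by
    have := grad_ineq g hg_diff hg_conv b a
    simp only [bregman]; linarith
  rcases eq_or_lt_of_le hN0 with hNz | hNpos
  · have hz : N ^ ((1 + α) / α) = 0 := by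
      rw [← hNz]
      exact Real.zero_rpow (by positivity)
    rw [hz, mul_zero]
    exact hbreg_nonneg
  · obtain ⟨v, hv1, hfv⟩ := exists_attains f
    set t : ℝ := (N / L) ^ (1 / α) with ht
    have hNL : (0:ℝ) < N / L := div_pos hNpos hL
    have htpos : 0 < t := Real.rpow_pos_of_pos hNL _
    set w : E := a - t • v with hw
    have hcb := grad_ineq g hg_diff hg_conv b w
    have hsm := hsmooth w a
    have hwa : w - a = -(t • v) := by rw [hw]; abel
    have hnorm_wa : ‖w - a‖ ≤ t := by
      rw [hwa, norm_neg, norm_smul, Real.norm_eq_abs, abs_of_pos htpos]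
      nlinarith
    have hpow_wa : ‖w - a‖ ^ (1 + α) ≤ t ^ (1 + α) :=
      Real.rpow_le_rpow (norm_nonneg _) hnorm_wa hα1.le
    have hsm' : g w - g a - (fderiv ℝ g a) (w - a) ≤ L / (1 + α) * t ^ (1 + α) := by
      have h2 : L / (1 + α) * ‖w - a‖ ^ (1 + α) ≤ L / (1 + α) * t ^ (1 + α) :=
        mul_le_mul_of_nonneg_left hpow_wa (by positivity)
      calc g w - g a - (fderiv ℝ g a) (w - a) = bregman g w a := rfl
        _ ≤ _ := hsm
        _ ≤ _ := h2
    have hfwa : f (w - a) = -(t * N) := by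
      rw [hwa, map_neg, f.map_smul, hfv, ← hN, smul_eq_mul]
    have hchain : t * N - L / (1 + α) * t ^ (1 + α) ≤ bregman g a b := by
      have e1 : (fderiv ℝ g a) (w - a) - (fderiv ℝ g b) (w - a) = f (w - a) := by
        simp [hf]
      have e2 : (fderiv ℝ g b) (w - b) - (fderiv ℝ g b) (a - b) = (fderiv ℝ g b) (w - a) := by
        rw [← map_sub]; congr 1; abel
      simp only [bregman]
      linarith [hcb, hsm', e1, e2, hfwa]
    refine le_trans (le_of_eq ?_) hchain
    have hp1 : (1:ℝ)/α * (1 + α) = 1/α + 1 := by field_simp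
    have hp2 : (1 + α)/α = 1/α + 1 := by field_simp
    have htpow : t ^ (1 + α) = N ^ (1/α) / L ^ (1/α) * (N / L) := by
      rw [ht, ← Real.rpow_mul hNL.le, hp1, Real.rpow_add hNL, Real.rpow_one,
        Real.div_rpow hN0 hL.le]
    have ht' : t = N ^ (1/α) / L ^ (1/α) := by
      rw [ht, Real.div_rpow hN0 hL.le]
    have hNpow : N ^ ((1+α)/α) = N ^ (1/α) * N := by
      rw [hp2, Real.rpow_add hNpos, Real.rpow_one]
    have hLneg : L ^ (-(1/α)) = (L ^ (1/α))⁻¹ := Real.rpow_neg hL.le _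
    rw [hNpow, hLneg, htpow, ht']
    have hQ : (0:ℝ) < L ^ (1/α) := Real.rpow_pos_of_pos hL _
    field_simp
    ring

theorem co_coercivity_of_gradients
    {E : Type*} [NormedAddCommGroup E] [NormedSpace ℝ E] [FiniteDimensional ℝ E]
    (α : ℝ) (hα0 : 0 < α) (hα1 : α ≤ 1)
    (g : E → ℝ) (hg_diff : Differentiable ℝ g) (hg_conv : ConvexOn ℝ Set.univ g)
    (L : ℝ) (hL : 0 < L)
    (hsmooth : ∀ a b : E, bregman g a b ≤ L / (1 + α) * ‖a - b‖ ^ (1 + α)) :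
    ∀ a b : E,
      2 * L ^ (-(1 / α)) * α / (1 + α) *
          ‖fderiv ℝ g a - fderiv ℝ g b‖ ^ ((1 + α) / α) ≤
        (fderiv ℝ g a - fderiv ℝ g b) (a - b) := by
  intro a b
  have k1 := key_bregman α hα0 g hg_diff hg_conv L hL hsmooth a b
  have k2 := key_bregman α hα0 g hg_diff hg_conv L hL hsmooth b a
  have hnrev : ‖fderiv ℝ g b - fderiv ℝ g a‖ = ‖fderiv ℝ g a - fderiv ℝ g b‖ :=
    norm_sub_rev _ _
  rw [hnrev] at k2
  have hsum : bregman g a b + bregman g b a = (fderiv ℝ g a - fderiv ℝ g b) (a - b) := by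
    simp only [bregman, ContinuousLinearMap.sub_apply, map_sub]
    ring
  have hdouble : 2 * L ^ (-(1 / α)) * α / (1 + α) *
      ‖fderiv ℝ g a - fderiv ℝ g b‖ ^ ((1 + α) / α) =
      L ^ (-(1 / α)) * α / (1 + α) * ‖fderiv ℝ g a - fderiv ℝ g b‖ ^ ((1 + α) / α) +
      L ^ (-(1 / α)) * α / (1 + α) * ‖fderiv ℝ g a - fderiv ℝ g b‖ ^ ((1 + α) / α) := by
    ring
  rw [hdouble, ← hsum]
  exact add_le_add k1 k2
end
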